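/- arXiv:1008.3216 — 2 statements merged into one kernel-verified Lean document; each statement's English description precedes it below -/
import Mathlib

section
/- Let G be a finite simple graph, let M be a maximum matching of G with |M| = m, let t be the number of isolated vertices of G, and let k be the number of bad vertices of G with respect to M. Then G has a total cover (S_V, S_E) with |S_V| + |S_E| = m + k + t. -/
open SimpleGraph

/-- A total cover of a simple graph `G`: a pair of a vertex set `SV` and an edge set
`SE ⊆ E(G)` such that every vertex not in `SV` is adjacent to a vertex of `SV` or is an
endpoint of an edge of `SE`, and every edge not in `SE` has an endpoint in `SV` or shares
an endpoint with an edge of `SE`. -/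
def IsTotalCover {V : Type*} (G : SimpleGraph V) (SV : Set V) (SE : Set (Sym2 V)) : Prop :=
  SE ⊆ G.edgeSet ∧
  (∀ v : V, v ∉ SV → (∃ u ∈ SV, G.Adj v u) ∨ (∃ e ∈ SE, v ∈ e)) ∧
  (∀ e ∈ G.edgeSet, e ∉ SE → (∃ v ∈ SV, v ∈ e) ∨ (∃ f ∈ SE, ∃ v : V, v ∈ e ∧ v ∈ f))

/-- A matching of `G`: a set of edges of `G` that are pairwise vertex-disjoint. -/
def IsMatchingSet {V : Type*} (G : SimpleGraph V) (M : Set (Sym2 V)) : Prop :=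
  M ⊆ G.edgeSet ∧ ∀ e ∈ M, ∀ f ∈ M, e ≠ f → ∀ v : V, v ∈ e → v ∉ f

/-- A maximum matching of `G`: a matching of largest cardinality. -/
def IsMaximumMatching {V : Type*} (G : SimpleGraph V) (M : Set (Sym2 V)) : Prop :=
  IsMatchingSet G M ∧ ∀ M' : Set (Sym2 V), IsMatchingSet G M' → M'.ncard ≤ M.ncard

/-- A vertex is covered by a matching `M` if it is an endpoint of some edge of `M`. -/
def CoveredBy {V : Type*} (M : Set (Sym2 V)) (v : V) : Prop :=
  ∃ e ∈ M, v ∈ e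

/-- A bad vertex with respect to a matching `M`: a vertex not covered by `M` which is
adjacent to both endpoints of some edge of `M`. -/
def IsBad {V : Type*} (G : SimpleGraph V) (M : Set (Sym2 V)) (w : V) : Prop :=
  ¬ CoveredBy M w ∧ ∃ u v : V, s(u, v) ∈ M ∧ G.Adj w u ∧ G.Adj w v

/-- An isolated vertex: a vertex of degree 0, i.e. adjacent to no vertex. -/
def IsIsolated {V : Type*} (G : SimpleGraph V) (v : V) : Prop :=
  ∀ u : V, ¬ G.Adj v u

/-- The total graph `T(G)` of `G`: its vertices are the vertices and edges of `G`, with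
adjacency given by adjacency/incidence in `G`. -/
def totalGraph {V : Type*} (G : SimpleGraph V) : SimpleGraph (V ⊕ G.edgeSet) where
  Adj x y :=
    match x, y with
    | .inl a, .inl b => G.Adj a b
    | .inl a, .inr e => a ∈ e.1
    | .inr e, .inl a => a ∈ e.1
    | .inr e, .inr f => e ≠ f ∧ ∃ v : V, v ∈ e.1 ∧ v ∈ f.1
  symm := by
    refine ⟨?_⟩
    rintro (a | e) (b | f) h
    · exact G.symm.symm _ _ h
    · exact h
    · exact h
    · exact ⟨h.1.symm, by obtain ⟨v, h1, h2⟩ := h.2; exact ⟨v, h2, h1⟩⟩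
  loopless := by
    refine ⟨?_⟩
    rintro (a | e) h
    · exact G.loopless.irrefl a h
    · exact h.1 rfl

/-!
Let `U` be the unmatched vertices that are neither isolated nor bad, and pick for every
`w ∈ U` a neighbour `z w`; it is matched because `M` is maximum. Take for `S_V` the isolated
vertices, the bad vertices and `z(U)`, and for `S_E` the edges of `M` that avoid `z(U)`.
No edge of `M` contains two vertices `z w ≠ z w'`: for `w = w'` the vertex `w` would be bad,
otherwise `w, z w, z w', w'` is an augmenting path. Hence `|z(U)| + |S_E| = m` and the pair
has size `t + k + m`. An edge `ab` missed by the pair would give an augmenting path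
`a, b, z w, w` or a bad vertex `a` (if `a` is unmatched), or an augmenting path
`w, z w, a, b, z w', w'` (if both are matched).
-/

section Matching

variable {V : Type*} {G : SimpleGraph V} {M F N : Set (Sym2 V)}

theorem IsMatchingSet.eq_of_mem_of_mem (hM : IsMatchingSet G M) {e f : Sym2 V} (he : e ∈ M)
    (hf : f ∈ M) {v : V} (hve : v ∈ e) (hvf : v ∈ f) : e = f :=
  by_contra fun hne => hM.2 e he f hf hne v hve hvf

theorem IsMatchingSet.not_coveredBy_of_isIsolated (hM : IsMatchingSet G M) {v : V}
    (hv : _root_.IsIsolated G v) : ¬CoveredBy M v := by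
  rintro ⟨e, he, hve⟩
  obtain ⟨u, rfl⟩ := Sym2.mem_iff_exists.1 hve
  exact hv u (hM.1 he)

theorem IsMatchingSet.ncard_add_ncard_sdiff [Finite V] (hM : IsMatchingSet G M) {A : Set V}
    (hA : ∀ v ∈ A, CoveredBy M v)
    (hAM : ∀ e ∈ M, ∀ v ∈ e, ∀ v' ∈ e, v ∈ A → v' ∈ A → v = v') :
    A.ncard + (M \ {e | ∃ v ∈ A, v ∈ e}).ncard = M.ncard := by
  choose f hfM hvf using hA
  have hA_eq : A.ncard = (M ∩ {e | ∃ v ∈ A, v ∈ e}).ncard := by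
    refine Set.ncard_congr f (fun v hv => ⟨hfM v hv, v, hv, hvf v hv⟩) ?_ ?_
    · exact fun v v' hv hv' h => hAM _ (hfM v hv) v (hvf v hv) v' (h ▸ hvf v' hv') hv hv'
    · rintro e ⟨he, v, hv, hve⟩
      exact ⟨v, hv, hM.eq_of_mem_of_mem (hfM v hv) he (hvf v hv) hve⟩
  rw [hA_eq, Set.ncard_inter_add_ncard_sdiff_eq_ncard]

theorem IsMatchingSet.not_mem_of_mem_sdiff (hM : IsMatchingSet G M) (hF : F ⊆ M)
    (hNF : ∀ e ∈ N, ∀ v ∈ e, CoveredBy M v → CoveredBy F v) {e f : Sym2 V}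
    (he : e ∈ M \ F) (hf : f ∈ N) {v : V} (hve : v ∈ e) : v ∉ f := fun hvf => by
  obtain ⟨f', hf', hvf'⟩ := hNF f hf v hvf ⟨e, he.1, hve⟩
  exact he.2 (hM.eq_of_mem_of_mem he.1 (hF hf') hve hvf' ▸ hf')

theorem IsMatchingSet.sdiff_union (hM : IsMatchingSet G M) (hF : F ⊆ M) (hN : IsMatchingSet G N)
    (hNF : ∀ e ∈ N, ∀ v ∈ e, CoveredBy M v → CoveredBy F v) :
    IsMatchingSet G (M \ F ∪ N) := by
  refine ⟨Set.union_subset (Set.sdiff_subset.trans hM.1) hN.1, ?_⟩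
  rintro e (he | he) f (hf | hf) hef v hve
  · exact hM.2 e he.1 f hf.1 hef v hve
  · exact hM.not_mem_of_mem_sdiff hF hNF he hf hve
  · exact fun hvf => hM.not_mem_of_mem_sdiff hF hNF hf he hvf hve
  · exact hN.2 e he f hf hef v hve

theorem IsMaximumMatching.ncard_le_of_exchange [Finite V] (hM : IsMaximumMatching G M)
    (hF : F ⊆ M) (hN : IsMatchingSet G N)
    (hNF : ∀ e ∈ N, ∀ v ∈ e, CoveredBy M v → CoveredBy F v) : N.ncard ≤ F.ncard := by
  have hdisj : Disjoint (M \ F) N := Set.disjoint_left.2 fun e he heN =>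
    hM.1.not_mem_of_mem_sdiff hF hNF he heN (Sym2.out_fst_mem e) (Sym2.out_fst_mem e)
  have hmax := hM.2 _ (hM.1.sdiff_union hF hN hNF)
  rw [Set.ncard_union_eq hdisj, Set.ncard_sdiff hF] at hmax
  have := Set.ncard_le_ncard hF
  omega

end Matching

section AugmentingPath

variable {V : Type*} [Finite V] {G : SimpleGraph V} {M : Set (Sym2 V)}

theorem IsMaximumMatching.coveredBy_of_adj (hM : IsMaximumMatching G M) {a b : V}
    (hab : G.Adj a b) (ha : ¬CoveredBy M a) : CoveredBy M b := by
  by_contra hb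
  have hN : IsMatchingSet G {s(a, b)} := ⟨by simpa using hab, by simp⟩
  have := hM.ncard_le_of_exchange (Set.empty_subset M) hN (by
    rintro e rfl v hv
    rcases Sym2.mem_iff.1 hv with rfl | rfl <;> tauto)
  simp at this

theorem IsMaximumMatching.no_augmenting_path_three (hM : IsMaximumMatching G M)
    {u v w w' : V} (huv : s(u, v) ∈ M) (hw : ¬CoveredBy M w) (hw' : ¬CoveredBy M w')
    (hww' : w ≠ w') (hwu : G.Adj w u) (hw'v : G.Adj w' v) : False := by
  have hu : CoveredBy M u := ⟨_, huv, Sym2.mem_mk_left u v⟩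
  have hv : CoveredBy M v := ⟨_, huv, Sym2.mem_mk_right u v⟩
  have huv' : u ≠ v := (hM.1.1 huv).ne
  have hwv : w ≠ v := by rintro rfl; exact hw hv
  have hw'u : w' ≠ u := by rintro rfl; exact hw' hu
  have hN : IsMatchingSet G {s(w, u), s(w', v)} := by
    refine ⟨by simp [Set.insert_subset_iff, hwu, hw'v], ?_⟩
    simp only [Set.mem_insert_iff, Set.mem_singleton_iff]
    rintro e (rfl | rfl) f (rfl | rfl) hef x hx <;> simp_all [Sym2.mem_iff] <;> grind
  have := hM.ncard_le_of_exchange (Set.singleton_subset_iff.2 huv) hN (by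
    simp only [Set.mem_insert_iff, Set.mem_singleton_iff]
    rintro e (rfl | rfl) x hx hx' <;> simp_all [Sym2.mem_iff, CoveredBy] <;> grind)
  rw [Set.ncard_pair (by simp [hww', hwv]), Set.ncard_singleton] at this
  omega

theorem IsMaximumMatching.no_augmenting_path_five (hM : IsMaximumMatching G M)
    {a b x y w w' : V} (hax : s(a, x) ∈ M) (hby : s(b, y) ∈ M) (hne : s(a, x) ≠ s(b, y))
    (hab : G.Adj a b) (hw : ¬CoveredBy M w) (hw' : ¬CoveredBy M w') (hww' : w ≠ w')
    (hwx : G.Adj w x) (hw'y : G.Adj w' y) : False := by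
  have hcov :
      ∀ v ∈ s(a, x), ∀ v' ∈ s(b, y), CoveredBy M v ∧ CoveredBy M v' ∧ v ≠ v' :=
    fun v hv v' hv' => ⟨⟨_, hax, hv⟩, ⟨_, hby, hv'⟩, by
      rintro rfl; exact hne (hM.1.eq_of_mem_of_mem hax hby hv hv')⟩
  simp only [Sym2.mem_iff, forall_eq_or_imp, forall_eq] at hcov
  have hxa : x ≠ a := (hM.1.1 hax).ne.symm
  have hby' : b ≠ y := (hM.1.1 hby).ne
  have hN : IsMatchingSet G {s(w, x), s(a, b), s(y, w')} := by
    refine ⟨by simp [Set.insert_subset_iff, hwx, hab, hw'y.symm], ?_⟩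
    simp only [Set.mem_insert_iff, Set.mem_singleton_iff]
    rintro e (rfl | rfl | rfl) f (rfl | rfl | rfl) hef v hv <;> simp_all [Sym2.mem_iff] <;> grind
  have := hM.ncard_le_of_exchange (F := {s(a, x), s(b, y)})
    (by simp [Set.insert_subset_iff, hax, hby]) hN (by
      simp only [Set.mem_insert_iff, Set.mem_singleton_iff]
      rintro e (rfl | rfl | rfl) v hv hv' <;> simp_all [Sym2.mem_iff, CoveredBy] <;> grind)
  rw [Set.ncard_eq_three.2 ⟨_, _, _, by grind [Sym2.eq_iff], by grind [Sym2.eq_iff],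
    by grind [Sym2.eq_iff], rfl⟩, Set.ncard_pair hne] at this
  omega

theorem IsMaximumMatching.false_of_adj_of_not_isBad (hM : IsMaximumMatching G M)
    {u v w w' : V} (huv : s(u, v) ∈ M) (hw : ¬CoveredBy M w) (hwb : ¬IsBad G M w)
    (hw' : ¬CoveredBy M w') (hwu : G.Adj w u) (hw'v : G.Adj w' v) : False := by
  obtain rfl | hww' := eq_or_ne w w'
  · exact hwb ⟨hw, u, v, huv, hwu, hw'v⟩
  · exact hM.no_augmenting_path_three huv hw hw' hww' hwu hw'v

end AugmentingPath

theorem exists_neighbor_choice {V : Type*} (G : SimpleGraph V) :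
    ∃ z : V → V, ∀ w, ¬_root_.IsIsolated G w → G.Adj w (z w) := by
  have : ∀ w, ∃ u, ¬_root_.IsIsolated G w → G.Adj w u := fun w => by
    by_cases hw : _root_.IsIsolated G w
    · exact ⟨w, fun h => (h hw).elim⟩
    · obtain ⟨u, hu⟩ : ∃ u, G.Adj w u := by simpa [_root_.IsIsolated] using hw
      exact ⟨u, fun _ => hu⟩
  choose z hz using this
  exact ⟨z, hz⟩

section TotalCover

variable {V : Type*}

def IsOrdinaryUnmatched (G : SimpleGraph V) (M : Set (Sym2 V)) (w : V) : Prop :=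
  ¬CoveredBy M w ∧ ¬IsBad G M w ∧ ¬_root_.IsIsolated G w

def pickedNeighbors (G : SimpleGraph V) (M : Set (Sym2 V)) (z : V → V) : Set V :=
  z '' {w | IsOrdinaryUnmatched G M w}

def coverVertices (G : SimpleGraph V) (M : Set (Sym2 V)) (z : V → V) : Set V :=
  {v | _root_.IsIsolated G v} ∪ {w | IsBad G M w} ∪ pickedNeighbors G M z

def edgesAvoiding (M : Set (Sym2 V)) (A : Set V) : Set (Sym2 V) :=
  M \ {e | ∃ v ∈ A, v ∈ e}

variable {G : SimpleGraph V} {M : Set (Sym2 V)} {z : V → V}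

theorem exists_eq_mk_of_not_mem_edgesAvoiding {A : Set V} {f : Sym2 V} {c : V} (hf : f ∈ M)
    (hcf : c ∈ f) (hcA : c ∉ A) (hfA : f ∉ edgesAvoiding M A) : ∃ x ∈ A, f = s(c, x) := by
  obtain ⟨x, hxA, hxf⟩ : ∃ x ∈ A, x ∈ f := by simpa [edgesAvoiding, hf] using hfA
  have hcx : c ≠ x := by rintro rfl; exact hcA hxA
  exact ⟨x, hxA, (Sym2.mem_and_mem_iff hcx).1 ⟨hcf, hxf⟩⟩

theorem isOrdinaryUnmatched_of_not_mem_coverVertices {v : V} (hv : v ∉ coverVertices G M z)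
    (hcov : ¬CoveredBy M v) : IsOrdinaryUnmatched G M v :=
  ⟨hcov, fun hb => hv (.inl (.inr hb)), fun hi => hv (.inl (.inl hi))⟩

theorem exists_partner_of_not_mem_coverVertices {c : V} (hc : c ∉ coverVertices G M z)
    (hcE : ∀ f ∈ edgesAvoiding M (pickedNeighbors G M z), c ∉ f) (hcov : CoveredBy M c) :
    ∃ w, IsOrdinaryUnmatched G M w ∧ s(c, z w) ∈ M := by
  obtain ⟨f, hf, hcf⟩ := hcov
  obtain ⟨_, ⟨w, hw, rfl⟩, rfl⟩ := exists_eq_mk_of_not_mem_edgesAvoiding hf hcf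
    (fun h => hc (.inr h)) (fun h => hcE _ h hcf)
  exact ⟨w, hw, hf⟩

theorem ncard_coverVertices [Finite V] (hM : IsMatchingSet G M)
    (hA : ∀ v ∈ pickedNeighbors G M z, CoveredBy M v) :
    (coverVertices G M z).ncard = {v | _root_.IsIsolated G v}.ncard + {w | IsBad G M w}.ncard +
      (pickedNeighbors G M z).ncard := by
  have hIB : Disjoint {v | _root_.IsIsolated G v} {w | IsBad G M w} :=
    Set.disjoint_left.2 fun v hi ⟨_, u, _, _, hvu, _⟩ => hi u hvu
  have hIBA :
      Disjoint ({v | _root_.IsIsolated G v} ∪ {w | IsBad G M w}) (pickedNeighbors G M z) :=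
    Set.disjoint_left.2 fun v hv hvA => by
      rcases hv with hi | hb
      · exact hM.not_coveredBy_of_isIsolated hi (hA v hvA)
      · exact hb.1 (hA v hvA)
  rw [coverVertices, Set.ncard_union_eq hIBA, Set.ncard_union_eq hIB]

variable [Finite V]

theorem coveredBy_of_mem_pickedNeighbors (hM : IsMaximumMatching G M)
    (hz : ∀ w, ¬_root_.IsIsolated G w → G.Adj w (z w)) {v : V}
    (hv : v ∈ pickedNeighbors G M z) : CoveredBy M v := by
  obtain ⟨w, hw, rfl⟩ := hv
  exact hM.coveredBy_of_adj (hz w hw.2.2) hw.1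

theorem eq_of_mem_pickedNeighbors (hM : IsMaximumMatching G M)
    (hz : ∀ w, ¬_root_.IsIsolated G w → G.Adj w (z w)) {e : Sym2 V}
    (he : e ∈ M) {v v' : V} (hve : v ∈ e) (hv'e : v' ∈ e) (hv : v ∈ pickedNeighbors G M z)
    (hv' : v' ∈ pickedNeighbors G M z) : v = v' := by
  by_contra hne
  obtain ⟨w, hw, rfl⟩ := hv
  obtain ⟨w', hw', rfl⟩ := hv'
  rw [(Sym2.mem_and_mem_iff hne).1 ⟨hve, hv'e⟩] at he
  exact hM.false_of_adj_of_not_isBad he hw.1 hw.2.1 hw'.1 (hz w hw.2.2) (hz w' hw'.2.2)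

theorem IsMaximumMatching.false_of_missed_edge_of_not_coveredBy (hM : IsMaximumMatching G M)
    (hz : ∀ w, ¬_root_.IsIsolated G w → G.Adj w (z w)) {a b : V} (hab : G.Adj a b)
    (ha : a ∉ coverVertices G M z) (hacov : ¬CoveredBy M a) (hb : b ∉ coverVertices G M z)
    (hbE : ∀ f ∈ edgesAvoiding M (pickedNeighbors G M z), b ∉ f) : False := by
  have hao := isOrdinaryUnmatched_of_not_mem_coverVertices ha hacov
  obtain ⟨w, hw, hbw⟩ :=
    exists_partner_of_not_mem_coverVertices hb hbE (hM.coveredBy_of_adj hab hacov)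
  exact hM.false_of_adj_of_not_isBad hbw hao.1 hao.2.1 hw.1 hab (hz w hw.2.2)

theorem IsMaximumMatching.false_of_missed_edge_of_coveredBy (hM : IsMaximumMatching G M)
    (hz : ∀ w, ¬_root_.IsIsolated G w → G.Adj w (z w)) {a b : V} (hab : G.Adj a b)
    (ha : a ∉ coverVertices G M z)
    (haE : ∀ f ∈ edgesAvoiding M (pickedNeighbors G M z), a ∉ f)
    (hacov : CoveredBy M a) (hb : b ∉ coverVertices G M z)
    (hbE : ∀ f ∈ edgesAvoiding M (pickedNeighbors G M z), b ∉ f) (hbcov : CoveredBy M b) :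
    False := by
  obtain ⟨w, hw, haw⟩ := exists_partner_of_not_mem_coverVertices ha haE hacov
  obtain ⟨w', hw', hbw'⟩ := exists_partner_of_not_mem_coverVertices hb hbE hbcov
  have hne : s(a, z w) ≠ s(b, z w') := by
    intro h
    have hbmem : b ∈ s(a, z w) := h ▸ Sym2.mem_mk_left b (z w')
    rcases Sym2.mem_iff.1 hbmem with rfl | rfl
    · exact hab.ne rfl
    · exact hb (.inr ⟨w, hw, rfl⟩)
  have hww' : w ≠ w' := by
    rintro rfl
    exact hne (hM.1.eq_of_mem_of_mem haw hbw' (Sym2.mem_mk_right _ _) (Sym2.mem_mk_right _ _))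
  exact hM.no_augmenting_path_five haw hbw' hne hab hw.1 hw'.1 hww' (hz w hw.2.2)
    (hz w' hw'.2.2)

theorem isTotalCover_coverVertices (hM : IsMaximumMatching G M)
    (hz : ∀ w, ¬_root_.IsIsolated G w → G.Adj w (z w)) :
    IsTotalCover G (coverVertices G M z) (edgesAvoiding M (pickedNeighbors G M z)) := by
  refine ⟨fun e he => hM.1.1 he.1, fun v hv => ?_, fun e he _ => ?_⟩
  · by_cases hcov : CoveredBy M v
    · obtain ⟨f, hf, hvf⟩ := hcov
      by_cases hfE : f ∈ edgesAvoiding M (pickedNeighbors G M z)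
      · exact .inr ⟨f, hfE, hvf⟩
      · obtain ⟨x, hx, rfl⟩ :=
          exists_eq_mk_of_not_mem_edgesAvoiding hf hvf (fun h => hv (.inr h)) hfE
        exact .inl ⟨x, .inr hx, hM.1.1 hf⟩
    · have hv' := isOrdinaryUnmatched_of_not_mem_coverVertices hv hcov
      exact .inl ⟨z v, .inr ⟨v, hv', rfl⟩, hz v hv'.2.2⟩
  · by_contra! h
    obtain ⟨hSV, hE⟩ := h
    induction e using Sym2.inductionOn with | hf a b => ?_
    have hab : G.Adj a b := he
    have ha : a ∉ coverVertices G M z := fun h => hSV a h (Sym2.mem_mk_left a b)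
    have hb : b ∉ coverVertices G M z := fun h => hSV b h (Sym2.mem_mk_right a b)
    have haE := fun f hf => hE f hf a (Sym2.mem_mk_left a b)
    have hbE := fun f hf => hE f hf b (Sym2.mem_mk_right a b)
    by_cases hacov : CoveredBy M a
    · by_cases hbcov : CoveredBy M b
      · exact hM.false_of_missed_edge_of_coveredBy hz hab ha haE hacov hb hbE hbcov
      · exact hM.false_of_missed_edge_of_not_coveredBy hz hab.symm hb hbcov ha haE
    · exact hM.false_of_missed_edge_of_not_coveredBy hz hab ha hacov hb hbE

end TotalCover

/-- with `M` a maximum matching of size `m`, `t` the number of isolated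
vertices and `k` the number of bad vertices, `G` has a total cover of size `m + k + t`. -/
theorem stmt_1 {V : Type*} [Fintype V] (G : SimpleGraph V)
    (M : Set (Sym2 V)) (hM : IsMaximumMatching G M)
    (m t k : ℕ)
    (hm : M.ncard = m)
    (ht : {v : V | _root_.IsIsolated G v}.ncard = t)
    (hk : {w : V | IsBad G M w}.ncard = k) :
    ∃ (SV : Set V) (SE : Set (Sym2 V)),
      IsTotalCover G SV SE ∧ SV.ncard + SE.ncard = m + k + t := by
  obtain ⟨z, hz⟩ := exists_neighbor_choice G
  have hA := fun v hv => coveredBy_of_mem_pickedNeighbors hM hz (v := v) hv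
  have hcount := hM.1.ncard_add_ncard_sdiff hA
    fun e he v hv v' hv' => eq_of_mem_pickedNeighbors hM hz he hv hv'
  refine ⟨_, _, isTotalCover_coverVertices hM hz, ?_⟩
  rw [ncard_coverVertices hM.1 hA, edgesAvoiding]
  omega
end

section
/- Let G be a finite simple graph and M a maximum matching of G. Let T₁ = {w₁, u₁, v₁} and T₂ = {w₂, u₂, v₂} be bad triangles, where u₁v₁ ∈ M, u₂v₂ ∈ M, w₁ and w₂ are the respective bad vertices, and w₁ ≠ w₂. Then no edge of G has one endpoint in {w₁, u₁, v₁} and the other endpoint in {w₂, u₂, v₂}; in particular, no vertex or edge of G can cover an edge of T₁ and simultaneously an edge of T₂. -/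
open SimpleGraph

/-! A bad triangle `w, u, v` means that `w - u - v` is an alternating path from an unmatched
vertex, so exchanging `uv` for `wu` yields another maximum matching in which `v` is unmatched.
An edge between the two triangles is then an edge between two unmatched vertices of a maximum
matching obtained by at most two such exchanges, and adding it would enlarge the matching. -/

section

variable {V : Type*} {G : SimpleGraph V} {M M' : Set (Sym2 V)} {e : Sym2 V} {a b u v w x : V}

lemma coveredBy_insert : CoveredBy (insert e M) x ↔ x ∈ e ∨ CoveredBy M x := by
  simp [CoveredBy]

lemma notMem_of_not_coveredBy (hx : ¬ CoveredBy M x) (he : e ∈ M) : x ∉ e :=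
  fun h => hx ⟨e, he, h⟩

lemma not_coveredBy_sdiff (hx : ¬ CoveredBy M x) (s : Set (Sym2 V)) :
    ¬ CoveredBy (M \ s) x :=
  fun ⟨e, he, hxe⟩ => hx ⟨e, he.1, hxe⟩

lemma not_coveredBy_insert_sdiff (hx : ¬ CoveredBy (M \ {e}) x) (hxw : x ≠ w) (hxu : x ≠ u) :
    ¬ CoveredBy (insert s(w, u) (M \ {e})) x := by
  rw [coveredBy_insert, Sym2.mem_iff]
  tauto

namespace IsMatchingSet

lemma mono (hM : IsMatchingSet G M) (h : M' ⊆ M) : IsMatchingSet G M' :=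
  ⟨h.trans hM.1, fun e he f hf => hM.2 e (h he) f (h hf)⟩

lemma not_coveredBy_sdiff_singleton (hM : IsMatchingSet G M) (he : e ∈ M) (hx : x ∈ e) :
    ¬ CoveredBy (M \ {e}) x :=
  fun ⟨f, ⟨hf, hfe⟩, hxf⟩ => hM.2 f hf e he hfe x hxf hx

lemma insert_of_not_coveredBy (hM : IsMatchingSet G M) (hab : G.Adj a b)
    (ha : ¬ CoveredBy M a) (hb : ¬ CoveredBy M b) : IsMatchingSet G (insert s(a, b) M) := by
  have hdisj : ∀ f ∈ M, ∀ y ∈ s(a, b), y ∉ f := by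
    intro f hf y hy
    rcases Sym2.mem_iff.1 hy with rfl | rfl
    exacts [notMem_of_not_coveredBy ha hf, notMem_of_not_coveredBy hb hf]
  refine ⟨Set.insert_subset hab hM.1, ?_⟩
  rintro e (rfl | he) f (rfl | hf) hef y hye hyf
  · exact hef rfl
  · exact hdisj f hf y hye hyf
  · exact hdisj e he y hyf hye
  · exact hM.2 e he f hf hef y hye hyf

end IsMatchingSet

namespace IsMaximumMatching

lemma finite (hM : IsMaximumMatching G M) : M.Finite := by
  by_contra hinf
  obtain ⟨e, he⟩ := Set.Infinite.nonempty hinf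
  have := hM.2 {e} (hM.1.mono (Set.singleton_subset_iff.2 he))
  rw [Set.ncard_singleton, Set.Infinite.ncard hinf] at this
  omega

lemma of_ncard_eq (hM : IsMaximumMatching G M) (hM' : IsMatchingSet G M')
    (h : M'.ncard = M.ncard) : IsMaximumMatching G M' :=
  ⟨hM', fun N hN => h ▸ hM.2 N hN⟩

theorem not_adj (hM : IsMaximumMatching G M) (ha : ¬ CoveredBy M a) (hb : ¬ CoveredBy M b) :
    ¬ G.Adj a b := by
  intro hab
  have hcard := hM.2 _ (hM.1.insert_of_not_coveredBy hab ha hb)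
  have hnew : s(a, b) ∉ M := fun h => notMem_of_not_coveredBy ha h (Sym2.mem_mk_left a b)
  rw [Set.ncard_insert_of_notMem hnew hM.finite] at hcard
  omega

lemma exchange (hM : IsMaximumMatching G M) (huv : s(u, v) ∈ M) (hw : ¬ CoveredBy M w)
    (hwu : G.Adj w u) : IsMaximumMatching G (insert s(w, u) (M \ {s(u, v)})) := by
  refine hM.of_ncard_eq ((hM.1.mono Set.sdiff_subset).insert_of_not_coveredBy hwu
    (not_coveredBy_sdiff hw _) (hM.1.not_coveredBy_sdiff_singleton huv (Sym2.mem_mk_left u v))) ?_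
  have hnew : s(w, u) ∉ M \ {s(u, v)} :=
    fun h => notMem_of_not_coveredBy hw h.1 (Sym2.mem_mk_left w u)
  rw [Set.ncard_insert_of_notMem hnew hM.finite.sdiff]
  exact Set.ncard_sdiff_singleton_add_one huv hM.finite

/-- `x - v - u - w` would be an augmenting path. -/
theorem not_adj_mate (hM : IsMaximumMatching G M) (huv : s(u, v) ∈ M) (hw : ¬ CoveredBy M w)
    (hwu : G.Adj w u) (hx : ¬ CoveredBy M x) (hxw : x ≠ w) : ¬ G.Adj x v := by
  have hvw : v ≠ w := fun h => notMem_of_not_coveredBy hw huv (h ▸ Sym2.mem_mk_right u v)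
  have hvu : v ≠ u := (G.mem_edgeSet.1 (hM.1.1 huv)).ne.symm
  refine (hM.exchange huv hw hwu).not_adj ?_ ?_
  · exact not_coveredBy_insert_sdiff (not_coveredBy_sdiff hx _) hxw
      (fun h => notMem_of_not_coveredBy hx huv (h ▸ Sym2.mem_mk_left u v))
  · exact not_coveredBy_insert_sdiff
      (hM.1.not_coveredBy_sdiff_singleton huv (Sym2.mem_mk_right u v)) hvw hvu

/-- `w₁ - a' - a - b - b' - w₂` would be an augmenting path. -/
theorem not_adj_of_mates {a' b' w₁ w₂ : V} (hM : IsMaximumMatching G M)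
    (ha : s(a, a') ∈ M) (hb : s(b, b') ∈ M)
    (hw₁ : ¬ CoveredBy M w₁) (hw₂ : ¬ CoveredBy M w₂)
    (hne : w₁ ≠ w₂) (h₁ : G.Adj w₁ a') (h₂ : G.Adj w₂ b') : ¬ G.Adj a b := by
  intro hab
  rw [Sym2.eq_swap] at ha hb
  by_cases heq : s(a', a) = s(b', b)
  · rcases Sym2.eq_iff.1 heq with ⟨-, rfl⟩ | ⟨rfl, rfl⟩
    · exact hab.ne rfl
    · exact hM.not_adj_mate ha hw₁ h₁ hw₂ hne.symm h₂
  have ha' : s(a', a) ∈ insert s(w₂, b') (M \ {s(b', b)}) := Or.inr ⟨ha, heq⟩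
  have hw₁' : ¬ CoveredBy (insert s(w₂, b') (M \ {s(b', b)})) w₁ :=
    not_coveredBy_insert_sdiff (not_coveredBy_sdiff hw₁ _) hne
      (fun h => notMem_of_not_coveredBy hw₁ hb (h ▸ Sym2.mem_mk_left b' b))
  have hb' : ¬ CoveredBy (insert s(w₂, b') (M \ {s(b', b)})) b :=
    not_coveredBy_insert_sdiff (hM.1.not_coveredBy_sdiff_singleton hb (Sym2.mem_mk_right b' b))
      (fun h => notMem_of_not_coveredBy hw₂ hb (h ▸ Sym2.mem_mk_right b' b))
      (G.mem_edgeSet.1 (hM.1.1 hb)).ne.symm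
  have hbw₁ : b ≠ w₁ :=
    fun h => notMem_of_not_coveredBy hw₁ hb (h ▸ Sym2.mem_mk_right b' b)
  exact (hM.exchange hb hw₂ h₂).not_adj_mate ha' hw₁' h₁ hb' hbw₁ hab.symm

end IsMaximumMatching

end

theorem stmt_9_general {V : Type*} (G : SimpleGraph V)
    (M : Set (Sym2 V)) (hM : IsMaximumMatching G M)
    (w₁ u₁ v₁ w₂ u₂ v₂ : V)
    (h₁ : s(u₁, v₁) ∈ M) (hw₁ : ¬ CoveredBy M w₁)
    (hw₁u : G.Adj w₁ u₁) (hw₁v : G.Adj w₁ v₁)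
    (h₂ : s(u₂, v₂) ∈ M) (hw₂ : ¬ CoveredBy M w₂)
    (hw₂u : G.Adj w₂ u₂) (hw₂v : G.Adj w₂ v₂)
    (hne : w₁ ≠ w₂) :
    ∀ a b : V, a ∈ ({w₁, u₁, v₁} : Set V) → b ∈ ({w₂, u₂, v₂} : Set V) →
      ¬ G.Adj a b := by
  have h₁' : s(v₁, u₁) ∈ M := Sym2.eq_swap ▸ h₁
  have h₂' : s(v₂, u₂) ∈ M := Sym2.eq_swap ▸ h₂
  intro a b ha hb hab
  rcases ha with rfl | rfl | rfl <;> rcases hb with rfl | rfl | rfl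
  · exact hM.not_adj hw₁ hw₂ hab
  · exact hM.not_adj_mate h₂' hw₂ hw₂v hw₁ hne hab
  · exact hM.not_adj_mate h₂ hw₂ hw₂u hw₁ hne hab
  · exact hM.not_adj_mate h₁' hw₁ hw₁v hw₂ hne.symm hab.symm
  · exact hM.not_adj_of_mates h₁ h₂ hw₁ hw₂ hne hw₁v hw₂v hab
  · exact hM.not_adj_of_mates h₁ h₂' hw₁ hw₂ hne hw₁v hw₂u hab
  · exact hM.not_adj_mate h₁ hw₁ hw₁u hw₂ hne.symm hab.symm
  · exact hM.not_adj_of_mates h₁' h₂ hw₁ hw₂ hne hw₁u hw₂v hab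
  · exact hM.not_adj_of_mates h₁' h₂' hw₁ hw₂ hne hw₁u hw₂u hab

/-- no edge of `G` joins the vertex sets of two bad triangles with distinct
bad vertices. -/
theorem stmt_9 {V : Type*} [Fintype V] (G : SimpleGraph V)
    (M : Set (Sym2 V)) (hM : IsMaximumMatching G M)
    (w₁ u₁ v₁ w₂ u₂ v₂ : V)
    (h₁ : s(u₁, v₁) ∈ M) (hw₁ : ¬ CoveredBy M w₁)
    (hw₁u : G.Adj w₁ u₁) (hw₁v : G.Adj w₁ v₁)
    (h₂ : s(u₂, v₂) ∈ M) (hw₂ : ¬ CoveredBy M w₂)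
    (hw₂u : G.Adj w₂ u₂) (hw₂v : G.Adj w₂ v₂)
    (hne : w₁ ≠ w₂) :
    ∀ a b : V, a ∈ ({w₁, u₁, v₁} : Set V) → b ∈ ({w₂, u₂, v₂} : Set V) →
      ¬ G.Adj a b :=
  stmt_9_general G M hM w₁ u₁ v₁ w₂ u₂ v₂ h₁ hw₁ hw₁u hw₁v h₂ hw₂ hw₂u hw₂v hne
end
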